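/- Let G be a finite simple graph whose vertex set is the disjoint union of two nonempty cliques C1 and C2 and the set U of universal vertices of G, with |U| = 2. Then G has a 3-tuple dominating set and γ×3(G) = 4. -/
import Mathlib


open Set

/-- The closed neighborhood `N[v]` of a vertex `v`: `v` together with its neighbors. -/
def closedNbhd {V : Type*} (G : SimpleGraph V) (v : V) : Set V :=
  insert v {w | G.Adj v w}

/-- `D` is a `k`-tuple dominating set of `G`: every vertex has at least `k` members of `D`
in its closed neighborhood. -/
def IsKTupleDomSet {V : Type*} (G : SimpleGraph V) (k : ℕ) (D : Set V) : Prop :=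
  ∀ v : V, k ≤ (closedNbhd G v ∩ D).ncard

/-- `γ×k(G)`: the minimum cardinality of a `k`-tuple dominating set of `G`. -/
noncomputable def gammaTuple {V : Type*} (G : SimpleGraph V) (k : ℕ) : ℕ :=
  sInf {n | ∃ D : Set V, IsKTupleDomSet G k D ∧ D.ncard = n}

/-- A vertex is universal if its closed neighborhood is the whole vertex set. -/
def IsUniversalVertex {V : Type*} (G : SimpleGraph V) (u : V) : Prop :=
  closedNbhd G u = Set.univ

lemma mem_closedNbhd_comm {V : Type*} {G : SimpleGraph V} {v w : V} :
    v ∈ closedNbhd G w ↔ w ∈ closedNbhd G v := by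
  simp only [closedNbhd, Set.mem_insert_iff, Set.mem_setOf_eq]
  constructor
  · rintro (h | h)
    · exact Or.inl h.symm
    · exact Or.inr h.symm
  · rintro (h | h)
    · exact Or.inl h.symm
    · exact Or.inr h.symm

/-- if `V(G)` is the disjoint union of two nonempty cliques and the set `U` of
universal vertices of `G`, with `|U| = 2`, then `G` has a `3`-tuple dominating set and
`γ×3(G) = 4`. -/
theorem stmt12 {V : Type*} [Fintype V] (G : SimpleGraph V) (C1 C2 U : Set V)
    (hd12 : Disjoint C1 C2) (hd1U : Disjoint C1 U) (hd2U : Disjoint C2 U)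
    (hunion : C1 ∪ C2 ∪ U = Set.univ)
    (hne1 : C1.Nonempty) (hne2 : C2.Nonempty)
    (hcl1 : G.IsClique C1) (hcl2 : G.IsClique C2)
    (hU : U = {u : V | IsUniversalVertex G u})
    (hUcard : U.ncard = 2) :
    (∃ D : Set V, IsKTupleDomSet G 3 D) ∧ gammaTuple G 3 = 4 := by
  obtain ⟨x1, hx1⟩ := hne1
  obtain ⟨x2, hx2⟩ := hne2
  obtain ⟨u1, u2, hu12, hUeq⟩ := Set.ncard_eq_two.mp hUcard
  have hu1U : u1 ∈ U := by rw [hUeq]; simp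
  have hu2U : u2 ∈ U := by rw [hUeq]; simp
  have huniv : ∀ u ∈ U, ∀ v, u ∈ closedNbhd G v := by
    intro u hu v
    rw [mem_closedNbhd_comm]
    have : IsUniversalVertex G u := by rw [hU] at hu; exact hu
    rw [this]; trivial
  have hx1U : x1 ∉ U := Set.disjoint_left.mp hd1U hx1
  have hx2U : x2 ∉ U := Set.disjoint_left.mp hd2U hx2
  have hx1u1 : x1 ≠ u1 := fun h => hx1U (h ▸ hu1U)
  have hx1u2 : x1 ≠ u2 := fun h => hx1U (h ▸ hu2U)
  have hx2u1 : x2 ≠ u1 := fun h => hx2U (h ▸ hu1U)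
  have hx2u2 : x2 ≠ u2 := fun h => hx2U (h ▸ hu2U)
  have hx12 : x1 ≠ x2 := fun h => Set.disjoint_left.mp hd12 hx1 (h ▸ hx2)
  set D : Set V := {u1, u2, x1, x2} with hDdef
  have hcard3 : ∀ x : V, x ≠ u1 → x ≠ u2 → ∀ s : Set V, u1 ∈ s → u2 ∈ s → x ∈ s →
      3 ≤ s.ncard := by
    intro x h1 h2 s hs1 hs2 hs3
    have h3 : ({u1, u2, x} : Set V).ncard = 3 :=
      Set.ncard_eq_three.mpr ⟨u1, u2, x, hu12, h1.symm, h2.symm, rfl⟩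
    calc 3 = ({u1, u2, x} : Set V).ncard := h3.symm
      _ ≤ s.ncard := Set.ncard_le_ncard (by
        intro y hy
        rcases hy with h | h | h
        · exact h ▸ hs1
        · exact h ▸ hs2
        · exact (Set.mem_singleton_iff.mp h) ▸ hs3) s.toFinite
  have hDdom : IsKTupleDomSet G 3 D := by
    intro v
    have hu1v : u1 ∈ closedNbhd G v := huniv u1 hu1U v
    have hu2v : u2 ∈ closedNbhd G v := huniv u2 hu2U v
    have hv : v ∈ C1 ∪ C2 ∪ U := hunion ▸ Set.mem_univ v
    have hself : ∀ w, w ∈ closedNbhd G w := fun w => Set.mem_insert w _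
    rcases hv with (hv | hv) | hv
    · refine hcard3 x1 hx1u1 hx1u2 _ ⟨hu1v, by simp [hDdef]⟩ ⟨hu2v, by simp [hDdef]⟩
        ⟨?_, by simp [hDdef]⟩
      by_cases h : v = x1
      · exact h ▸ hself v
      · exact Set.mem_insert_iff.mpr (Or.inr (hcl1 hv hx1 h))
    · refine hcard3 x2 hx2u1 hx2u2 _ ⟨hu1v, by simp [hDdef]⟩ ⟨hu2v, by simp [hDdef]⟩
        ⟨?_, by simp [hDdef]⟩
      by_cases h : v = x2
      · exact h ▸ hself v
      · exact Set.mem_insert_iff.mpr (Or.inr (hcl2 hv hx2 h))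
    · have : IsUniversalVertex G v := by rw [hU] at hv; exact hv
      refine hcard3 x1 hx1u1 hx1u2 _ ⟨hu1v, by simp [hDdef]⟩ ⟨hu2v, by simp [hDdef]⟩
        ⟨?_, by simp [hDdef]⟩
      rw [this]; trivial
  have hD4 : D.ncard = 4 := by
    rw [hDdef]
    rw [Set.ncard_insert_of_notMem (by simp [hu12, hx1u1.symm, hx2u1.symm]) (Set.toFinite _)]
    rw [Set.ncard_insert_of_notMem (by simp [hx1u2.symm, hx2u2.symm]) (Set.toFinite _)]
    rw [Set.ncard_insert_of_notMem (by simp [hx12]) (Set.toFinite _)]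
    simp
  refine ⟨⟨D, hDdom⟩, ?_⟩
  have hlb : ∀ n ∈ {n | ∃ D : Set V, IsKTupleDomSet G 3 D ∧ D.ncard = n}, 4 ≤ n := by
    rintro n ⟨D', hdom, rfl⟩
    by_contra h
    push_neg at h
    have h3 : 3 ≤ D'.ncard := by
      calc 3 ≤ (closedNbhd G x1 ∩ D').ncard := hdom x1
        _ ≤ D'.ncard := Set.ncard_le_ncard Set.inter_subset_right (Set.toFinite _)
    have hsub : ∀ v, D' ⊆ closedNbhd G v := by
      intro v
      have heq : closedNbhd G v ∩ D' = D' :=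
        Set.eq_of_subset_of_ncard_le Set.inter_subset_right
          (le_trans (by omega) (hdom v)) (Set.toFinite _)
      rw [← heq]
      exact Set.inter_subset_left
    have hDU : D' ⊆ U := by
      intro d hd
      rw [hU]
      show IsUniversalVertex G d
      rw [IsUniversalVertex, Set.eq_univ_iff_forall]
      intro v
      exact mem_closedNbhd_comm.mp (hsub v hd)
    have := Set.ncard_le_ncard hDU (Set.toFinite _)
    omega
  have hmem : 4 ∈ {n | ∃ D : Set V, IsKTupleDomSet G 3 D ∧ D.ncard = n} := ⟨D, hDdom, hD4⟩
  exact le_antisymm (Nat.sInf_le hmem) (le_csInf ⟨4, hmem⟩ hlb)
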